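/- For each A ≥ 1, if Ω ⊂ ℂ is an A-uniform domain, then any two points of the closure of Ω can be joined by an A-uniform curve γ : [0,1] → closure(Ω). -/

import Mathlib

open Set Metric Filter Topology
open scoped ENNReal

noncomputable section

/-- `S` is a connected component of the complement of `Ω`. -/
def IsComplComponent (Ω S : Set ℂ) : Prop := ∃ z ∈ Ωᶜ, S = connectedComponentIn Ωᶜ z

/-- The inner length metric `λ_Ω`: infimum of lengths of curves in `Ω` joining the points. -/
def innerLen (Ω : Set ℂ) (a b : ℂ) : ℝ≥0∞ :=
  ⨅ γ : {γ : ℝ → ℂ // ContinuousOn γ (Set.Icc 0 1) ∧ Set.MapsTo γ (Set.Icc 0 1) Ω ∧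
      γ 0 = a ∧ γ 1 = b}, eVariationOn γ.1 (Set.Icc 0 1)

/-- The inner diameter metric `ρ_Ω`: infimum of diameters of curves in `Ω` joining the points. -/
def innerDiam (Ω : Set ℂ) (a b : ℂ) : ℝ≥0∞ :=
  ⨅ γ : {γ : ℝ → ℂ // ContinuousOn γ (Set.Icc 0 1) ∧ Set.MapsTo γ (Set.Icc 0 1) Ω ∧
      γ 0 = a ∧ γ 1 = b}, EMetric.diam (γ.1 '' Set.Icc 0 1)

/-- An inner `A`-uniform curve (length version) in `Ω`. -/
def IsInnerUniformCurve (A : ℝ) (Ω : Set ℂ) (γ : ℝ → ℂ) : Prop :=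
  ContinuousOn γ (Set.Icc 0 1) ∧ Set.MapsTo γ (Set.Icc 0 1) Ω ∧
  eVariationOn γ (Set.Icc 0 1) ≤ ENNReal.ofReal A * innerLen Ω (γ 0) (γ 1) ∧
  ∀ t ∈ Set.Icc (0:ℝ) 1,
    min (eVariationOn γ (Set.Icc 0 t)) (eVariationOn γ (Set.Icc t 1))
      ≤ ENNReal.ofReal (A * Metric.infDist (γ t) (frontier Ω))

/-- An inner `A`-uniform domain in the plane. -/
def IsInnerUniformDomain (A : ℝ) (Ω : Set ℂ) : Prop :=
  IsOpen Ω ∧ IsConnected Ω ∧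
  ∀ a ∈ Ω, ∀ b ∈ Ω, ∃ γ : ℝ → ℂ, IsInnerUniformCurve A Ω γ ∧ γ 0 = a ∧ γ 1 = b

/-- An `A`-uniform curve in `Ω`. -/
def IsUniformCurve (A : ℝ) (Ω : Set ℂ) (γ : ℝ → ℂ) : Prop :=
  ContinuousOn γ (Set.Icc 0 1) ∧ Set.MapsTo γ (Set.Icc 0 1) Ω ∧
  eVariationOn γ (Set.Icc 0 1) ≤ ENNReal.ofReal (A * dist (γ 0) (γ 1)) ∧
  ∀ t ∈ Set.Icc (0:ℝ) 1,
    min (eVariationOn γ (Set.Icc 0 t)) (eVariationOn γ (Set.Icc t 1))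
      ≤ ENNReal.ofReal (A * Metric.infDist (γ t) (frontier Ω))

/-- An `A`-uniform domain in the plane. -/
def IsUniformDomain (A : ℝ) (Ω : Set ℂ) : Prop :=
  IsOpen Ω ∧ IsConnected Ω ∧
  ∀ a ∈ Ω, ∀ b ∈ Ω, ∃ γ : ℝ → ℂ, IsUniformCurve A Ω γ ∧ γ 0 = a ∧ γ 1 = b
/-- An `A`-uniform curve with values in the closure of `Ω` (endpoints may lie on `∂Ω`). -/
def IsUniformCurveIn (A : ℝ) (Ω : Set ℂ) (γ : ℝ → ℂ) : Prop :=
  ContinuousOn γ (Set.Icc 0 1) ∧ Set.MapsTo γ (Set.Icc 0 1) (closure Ω) ∧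
  eVariationOn γ (Set.Icc 0 1) ≤ ENNReal.ofReal (A * dist (γ 0) (γ 1)) ∧
  ∀ t ∈ Set.Icc (0:ℝ) 1,
    min (eVariationOn γ (Set.Icc 0 t)) (eVariationOn γ (Set.Icc t 1))
      ≤ ENNReal.ofReal (A * Metric.infDist (γ t) (frontier Ω))

/-!
Join interior points `aₙ → x` and `bₙ → y` by `A`-uniform curves `Γₙ`. Reparametrized by
`t + ℓ(Γₙ|[0,t])`, suitably rescaled, they become uniformly Lipschitz, so along an ultrafilter
they converge pointwise to a Lipschitz curve `γ` in `closure Ω` from `x` to `y`. Variation is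
lower semicontinuous under pointwise convergence, while `dist` and `infDist · (frontier Ω)` are
continuous, so both inequalities defining an `A`-uniform curve pass to the limit.
-/

open scoped NNReal

theorem min_eVariationOn_le_of_tendsto {ι α E : Type*} [LinearOrder α] [PseudoEMetricSpace E]
    {p : Filter ι} [p.NeBot] {F : ι → α → E} {f : α → E} {s t : Set α} {c : ι → ℝ≥0∞}
    {c₀ : ℝ≥0∞} (hs : ∀ x ∈ s, Tendsto (fun i => F i x) p (𝓝 (f x)))
    (ht : ∀ x ∈ t, Tendsto (fun i => F i x) p (𝓝 (f x))) (hc : Tendsto c p (𝓝 c₀))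
    (hF : ∀ i, min (eVariationOn (F i) s) (eVariationOn (F i) t) ≤ c i) :
    min (eVariationOn f s) (eVariationOn f t) ≤ c₀ := by
  by_contra! hlt
  obtain ⟨d, hc₀d, hdf⟩ := exists_between hlt
  obtain ⟨i, hds, hdt, hcd⟩ :=
    ((eVariationOn.lowerSemicontinuous_aux hs (hdf.trans_le (min_le_left _ _))).and
      ((eVariationOn.lowerSemicontinuous_aux ht (hdf.trans_le (min_le_right _ _))).and
        (hc.eventually_lt_const hc₀d))).exists
  exact (lt_min hds hdt).not_ge ((hF i).trans hcd.le)

section variationOnFromTo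

variable {α E : Type*} [LinearOrder α] [PseudoMetricSpace E] {f : α → E} {s : Set α}

theorem LocallyBoundedVariationOn.dist_le_variationOnFromTo_sub
    (hf : LocallyBoundedVariationOn f s) {a b c : α} (ha : a ∈ s) (hb : b ∈ s) (hc : c ∈ s)
    (hbc : b ≤ c) :
    dist (f b) (f c) ≤ variationOnFromTo f s a c - variationOnFromTo f s a b := by
  rw [variationOnFromTo.sub_right hf ha hc hb, variationOnFromTo.eq_of_le f s hbc, dist_edist]
  exact ENNReal.toReal_mono (hf b c hb hc)
    (eVariationOn.edist_le f ⟨hb, le_rfl, hbc⟩ ⟨hc, hbc, le_rfl⟩)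

theorem LocallyBoundedVariationOn.continuousOn_variationOnFromTo [TopologicalSpace α]
    [OrderTopology α] (hf : LocallyBoundedVariationOn f s) (hc : ContinuousOn f s) {a : α}
    (ha : a ∈ s) : ContinuousOn (variationOnFromTo f s a) s := by
  intro b hb
  have hleft := variationOnFromTo.tendsto_left ha hb hf ((hc b hb).mono inter_subset_left)
  have hright := variationOnFromTo.tendsto_right ha hb hf ((hc b hb).mono inter_subset_left)
  rw [dist_self, sub_zero] at hleft
  rw [dist_self, add_zero] at hright
  rw [← continuousWithinAt_sdiff_self, sdiff_eq, ← Iio_union_Ioi, inter_union_distrib_left]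
  exact ContinuousWithinAt.union hleft hright

theorem exists_monotoneOn_lipschitzOnWith_comp {f : ℝ → E} (hc : ContinuousOn f (Icc 0 1))
    (hf : BoundedVariationOn f (Icc 0 1)) :
    ∃ m : ℝ → ℝ, MonotoneOn m (Icc 0 1) ∧ MapsTo m (Icc 0 1) (Icc 0 1) ∧ m 0 = 0 ∧ m 1 = 1 ∧
      LipschitzOnWith (1 + (eVariationOn f (Icc 0 1)).toNNReal) (f ∘ m) (Icc 0 1) := by
  set I := Icc (0:ℝ) 1
  have hfI := hf.locallyBoundedVariationOn
  have h0 : (0:ℝ) ∈ I := left_mem_Icc.2 zero_le_one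
  have h1 : (1:ℝ) ∈ I := right_mem_Icc.2 zero_le_one
  -- Arclength alone may be constant on intervals; adding `t` makes `ψ` strictly increasing,
  -- and it stays continuous, so it maps `[0,1]` bijectively onto `[0,L]`.
  set φ := variationOnFromTo f I 0
  set ψ : ℝ → ℝ := fun t => t + φ t
  set L := ψ 1
  have hL : L = 1 + (eVariationOn f I).toReal := by
    simp only [L, ψ, φ, variationOnFromTo.eq_of_le f I zero_le_one, I, inter_self]
  have hL1 : 1 ≤ L := by rw [hL]; linarith [ENNReal.toReal_nonneg (a := eVariationOn f I)]
  have hψ0 : ψ 0 = 0 := by simp only [ψ, φ, variationOnFromTo.self, add_zero]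
  have hψmono : StrictMonoOn ψ I := fun t ht t' ht' htt =>
    add_lt_add_of_lt_of_le htt (variationOnFromTo.monotoneOn hfI h0 ht ht' htt.le)
  have hψcont : ContinuousOn ψ I :=
    continuousOn_id.add (hfI.continuousOn_variationOnFromTo hc h0)
  have hsurj : ∀ σ ∈ Icc 0 L, ∃ t ∈ I, ψ t = σ := by
    intro σ hσ
    rw [← hψ0] at hσ
    exact intermediate_value_Icc zero_le_one hψcont hσ
  set g := Function.invFunOn ψ I
  have hg : ∀ σ ∈ Icc 0 L, g σ ∈ I ∧ ψ (g σ) = σ := fun σ hσ =>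
    ⟨Function.invFunOn_mem (hsurj σ hσ), Function.invFunOn_eq (hsurj σ hσ)⟩
  have hg0 : g 0 = 0 := hψmono.injOn (hg 0 ⟨le_rfl, by linarith⟩).1 h0
    ((hg 0 ⟨le_rfl, by linarith⟩).2.trans hψ0.symm)
  have hg1 : g L = 1 :=
    hψmono.injOn (hg L ⟨by linarith, le_rfl⟩).1 h1 (hg L ⟨by linarith, le_rfl⟩).2
  have hg_lip : ∀ σ ∈ Icc 0 L, ∀ σ' ∈ Icc 0 L, σ ≤ σ' →
      g σ ≤ g σ' ∧ dist (f (g σ)) (f (g σ')) ≤ σ' - σ := by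
    intro σ hσ σ' hσ' hσσ'
    obtain ⟨hgσ, hψσ⟩ := hg σ hσ
    obtain ⟨hgσ', hψσ'⟩ := hg σ' hσ'
    have hle : g σ ≤ g σ' := (hψmono.le_iff_le hgσ hgσ').1 (by rw [hψσ, hψσ']; exact hσσ')
    refine ⟨hle, (hfI.dist_le_variationOnFromTo_sub h0 hgσ hgσ' hle).trans ?_⟩
    simp only [ψ] at hψσ hψσ'
    linarith
  have hscale : ∀ s ∈ I, L * s ∈ Icc 0 L := fun s hs =>
    ⟨by nlinarith [hs.1], by nlinarith [hs.2]⟩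
  refine ⟨fun s => g (L * s), fun s hs s' hs' hss' => ?_, fun s hs => (hg _ (hscale s hs)).1,
    by simp [hg0], by simp [hg1], ?_⟩
  · exact (hg_lip _ (hscale s hs) _ (hscale s' hs') (by nlinarith)).1
  · have hK : ((1 + (eVariationOn f I).toNNReal : ℝ≥0) : ℝ) = L := by
      rw [hL, NNReal.coe_add, NNReal.coe_one, ENNReal.coe_toNNReal_eq_toReal]
    refine LipschitzOnWith.of_dist_le_mul fun s hs s' hs' => ?_
    rw [hK, Real.dist_eq]
    wlog hss' : s ≤ s' generalizing s s'
    · rw [dist_comm, abs_sub_comm]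
      exact this s' hs' s hs (le_of_not_ge hss')
    calc dist (f (g (L * s))) (f (g (L * s'))) ≤ L * s' - L * s :=
          (hg_lip _ (hscale s hs) _ (hscale s' hs') (by nlinarith)).2
      _ = L * |s - s'| := by rw [abs_of_nonpos (by linarith)]; ring

end variationOnFromTo

theorem exists_tendsto_ultrafilter_of_lipschitzOnWith {ι α E : Type*} [PseudoMetricSpace α]
    [PseudoMetricSpace E] [ProperSpace E] {Γ : ι → α → E} {K : ℝ≥0} {s : Set α} {t₀ : α}
    (ht₀ : t₀ ∈ s) (hlip : ∀ i, LipschitzOnWith K (Γ i) s)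
    (hbdd : Bornology.IsBounded (range fun i => Γ i t₀)) (U : Ultrafilter ι) :
    ∃ γ : α → E, ∀ t ∈ s, Tendsto (fun i => Γ i t) U (𝓝 (γ t)) := by
  have hconv : ∀ t ∈ s, ∃ z, Tendsto (fun i => Γ i t) U (𝓝 z) := by
    intro t ht
    have hmem : ∀ i, Γ i t ∈ cthickening (K * dist t t₀) (range fun i => Γ i t₀) := fun i =>
      mem_cthickening_of_dist_le _ _ _ _ (mem_range_self i) ((hlip i).dist_le_mul t ht t₀ ht₀)
    obtain ⟨z, -, hz⟩ := hbdd.cthickening.isCompact_closure.ultrafilter_le_nhds'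
      (U.map fun i => Γ i t) (Ultrafilter.mem_map.2 (univ_mem' fun i => subset_closure (hmem i)))
    exact ⟨z, hz⟩
  have : Nonempty E := ⟨Γ (Classical.choice (U : Filter ι).nonempty_of_neBot) t₀⟩
  choose! γ hγ using hconv
  exact ⟨γ, hγ⟩

section UniformCurve

variable {A : ℝ} {Ω : Set ℂ}

theorem IsUniformCurve.comp {γ : ℝ → ℂ} {m : ℝ → ℝ} (hγ : IsUniformCurve A Ω γ)
    (hm : MonotoneOn m (Icc 0 1)) (hmaps : MapsTo m (Icc 0 1) (Icc 0 1)) (h0 : m 0 = 0)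
    (h1 : m 1 = 1) (hc : ContinuousOn (γ ∘ m) (Icc 0 1)) : IsUniformCurve A Ω (γ ∘ m) := by
  obtain ⟨-, hγΩ, hlen, hcigar⟩ := hγ
  have hvar : ∀ u ∈ Icc (0:ℝ) 1, ∀ v ∈ Icc (0:ℝ) 1,
      eVariationOn (γ ∘ m) (Icc u v) ≤ eVariationOn γ (Icc (m u) (m v)) := by
    intro u hu v hv
    have hsub : Icc u v ⊆ Icc 0 1 := Icc_subset_Icc hu.1 hv.2
    exact eVariationOn.comp_le_of_monotoneOn γ m (hm.mono hsub) fun x hx =>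
      ⟨hm hu (hsub hx) hx.1, hm (hsub hx) hv hx.2⟩
  have hI0 : (0:ℝ) ∈ Icc (0:ℝ) 1 := left_mem_Icc.2 zero_le_one
  have hI1 : (1:ℝ) ∈ Icc (0:ℝ) 1 := right_mem_Icc.2 zero_le_one
  refine ⟨hc, hγΩ.comp hmaps, ?_, fun t ht => ?_⟩
  · rw [Function.comp_apply, Function.comp_apply, h0, h1]
    exact (hvar 0 hI0 1 hI1).trans (by rw [h0, h1]; exact hlen)
  · refine (min_le_min (hvar 0 hI0 t ht) (hvar t ht 1 hI1)).trans ?_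
    simpa only [Function.comp_apply, h0, h1] using hcigar (m t) (hmaps ht)

theorem IsUniformCurve.exists_lipschitzOnWith {γ : ℝ → ℂ} (hγ : IsUniformCurve A Ω γ) :
    ∃ Γ : ℝ → ℂ, IsUniformCurve A Ω Γ ∧ Γ 0 = γ 0 ∧ Γ 1 = γ 1 ∧
      LipschitzOnWith (1 + (A * dist (γ 0) (γ 1)).toNNReal) Γ (Icc 0 1) := by
  have hlen := hγ.2.2.1
  obtain ⟨m, hm, hmaps, h0, h1, hlip⟩ := exists_monotoneOn_lipschitzOnWith_comp hγ.1
    (ne_top_of_le_ne_top ENNReal.ofReal_ne_top hlen)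
  refine ⟨γ ∘ m, hγ.comp hm hmaps h0 h1 hlip.continuousOn, by simp [h0], by simp [h1],
    hlip.weaken ?_⟩
  gcongr
  exact ENNReal.toNNReal_mono ENNReal.ofReal_ne_top hlen

theorem isUniformCurveIn_of_tendsto {ι : Type*} {p : Filter ι} [p.NeBot] {Γ : ι → ℝ → ℂ}
    {γ : ℝ → ℂ} {K : ℝ≥0} (hΓ : ∀ i, IsUniformCurve A Ω (Γ i))
    (hlip : ∀ i, LipschitzOnWith K (Γ i) (Icc 0 1))
    (hlim : ∀ t ∈ Icc (0:ℝ) 1, Tendsto (fun i => Γ i t) p (𝓝 (γ t))) :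
    IsUniformCurveIn A Ω γ := by
  have hγlip : LipschitzOnWith K γ (Icc 0 1) := by
    rw [lipschitzOnWith_iff_restrict]
    exact (isClosed_setOfPred_lipschitzWith K).mem_of_tendsto
      (tendsto_pi_nhds.2 fun t => hlim t t.2) (Eventually.of_forall fun i => (hlip i).to_restrict)
  have hI0 : (0:ℝ) ∈ Icc (0:ℝ) 1 := left_mem_Icc.2 zero_le_one
  have hI1 : (1:ℝ) ∈ Icc (0:ℝ) 1 := right_mem_Icc.2 zero_le_one
  refine ⟨hγlip.continuousOn,
    fun t ht => mem_closure_of_tendsto (hlim t ht) (Eventually.of_forall fun i => (hΓ i).2.1 ht),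
    ?_, fun t ht => ?_⟩
  · have hlen := min_eVariationOn_le_of_tendsto hlim hlim
      (ENNReal.tendsto_ofReal (((hlim 0 hI0).dist (hlim 1 hI1)).const_mul A))
      (fun i => (min_self _).trans_le (hΓ i).2.2.1)
    rwa [min_self] at hlen
  · exact min_eVariationOn_le_of_tendsto
      (fun u hu => hlim u (Icc_subset_Icc le_rfl ht.2 hu))
      (fun u hu => hlim u (Icc_subset_Icc ht.1 le_rfl hu))
      (ENNReal.tendsto_ofReal
        ((((continuous_infDist_pt _).tendsto _).comp (hlim t ht)).const_mul A))
      (fun i => (hΓ i).2.2.2 t ht)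

end UniformCurve

theorem statement_18_general (A : ℝ) (Ω : Set ℂ) (h : IsUniformDomain A Ω) :
    ∀ x ∈ closure Ω, ∀ y ∈ closure Ω,
      ∃ γ : ℝ → ℂ, IsUniformCurveIn A Ω γ ∧ γ 0 = x ∧ γ 1 = y := by
  intro x hx y hy
  obtain ⟨a, haΩ, hax⟩ := mem_closure_iff_seq_limit.1 hx
  obtain ⟨b, hbΩ, hby⟩ := mem_closure_iff_seq_limit.1 hy
  have hcurves : ∀ n, ∃ Γ : ℝ → ℂ, IsUniformCurve A Ω Γ ∧ Γ 0 = a n ∧ Γ 1 = b n ∧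
      LipschitzOnWith (1 + (A * dist (a n) (b n)).toNNReal) Γ (Icc 0 1) := fun n => by
    obtain ⟨γ, hγ, h0, h1⟩ := h.2.2 (a n) (haΩ n) (b n) (hbΩ n)
    rw [← h0, ← h1]
    exact hγ.exists_lipschitzOnWith
  choose Γ hΓ hΓ0 hΓ1 hΓlip using hcurves
  obtain ⟨K, hK⟩ := (tendsto_const_nhds.add
    (tendsto_real_toNNReal ((hax.dist hby).const_mul A))).bddAbove_range
  have hlipK : ∀ n, LipschitzOnWith K (Γ n) (Icc 0 1) := fun n =>
    (hΓlip n).weaken (hK (mem_range_self n))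
  -- The ultrafilter replaces the diagonal subsequence of the Arzelà–Ascoli argument.
  obtain ⟨γ, hγ⟩ := exists_tendsto_ultrafilter_of_lipschitzOnWith (left_mem_Icc.2 zero_le_one)
    hlipK (by simpa only [hΓ0] using isBounded_range_of_tendsto a hax) (Ultrafilter.of atTop)
  refine ⟨γ, isUniformCurveIn_of_tendsto hΓ hlipK hγ, ?_, ?_⟩
  · refine tendsto_nhds_unique (hγ 0 (left_mem_Icc.2 zero_le_one)) ?_
    simpa only [hΓ0] using hax.mono_left (Ultrafilter.of_le _)
  · refine tendsto_nhds_unique (hγ 1 (right_mem_Icc.2 zero_le_one)) ?_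
    simpa only [hΓ1] using hby.mono_left (Ultrafilter.of_le _)

/-- In an `A`-uniform domain `Ω ⊆ ℂ`, any two points of the closure of `Ω`
can be joined by an `A`-uniform curve `γ : [0,1] → closure(Ω)`. -/
theorem statement_18 (A : ℝ) (hA : 1 ≤ A) (Ω : Set ℂ) (h : IsUniformDomain A Ω) :
    ∀ x ∈ closure Ω, ∀ y ∈ closure Ω,
      ∃ γ : ℝ → ℂ, IsUniformCurveIn A Ω γ ∧ γ 0 = x ∧ γ 1 = y :=
  statement_18_general A Ω h
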